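/- arXiv:math/0209239 — 3 statements merged into one kernel-verified Lean document; each statement's English description precedes it below -/
import Mathlib

section
/- Let n ≥ 3, K a field of prime characteristic p with p ∤ n, and R = K[X_1,...,X_n]/(X_1^n+⋯+X_n^n). For every q = p^e with q ≡ 1 mod n, writing q = nk+1, one has (x_1⋯x_n)^{(n-2)q+1} ∈ (x_1^{(n-1)q}, ..., x_n^{(n-1)q}) in R. -/
open MvPolynomial Finsupp

namespace Stmt15Aux

variable {K : Type*} [Field K]

/-- The part of a polynomial supported on exponents satisfying `P`. -/
noncomputable def part {m : ℕ} (f : MvPolynomial (Fin m) K) (P : (Fin m →₀ ℕ) → Prop)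
    [DecidablePred P] : MvPolynomial (Fin m) K :=
  ∑ v ∈ f.support.filter P, monomial v (coeff v f)

lemma coeff_part {m : ℕ} (f : MvPolynomial (Fin m) K) (P : (Fin m →₀ ℕ) → Prop)
    [DecidablePred P] (w : Fin m →₀ ℕ) :
    coeff w (part f P) = if P w then coeff w f else 0 := by
  classical
  rw [part, MvPolynomial.coeff_sum]
  simp only [coeff_monomial]
  rw [Finset.sum_ite_eq' (f.support.filter P) w (fun v => coeff v f)]
  by_cases hPw : P w
  · by_cases hws : coeff w f = 0
    · simp [hws]
    · simp [Finset.mem_filter, MvPolynomial.mem_support_iff, hws, hPw]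
  · simp [Finset.mem_filter, hPw]

lemma part_add_part_not {m : ℕ} (f : MvPolynomial (Fin m) K) (P : (Fin m →₀ ℕ) → Prop)
    [DecidablePred P] : part f P + part f (fun v => ¬ P v) = f := by
  classical
  apply MvPolynomial.ext
  intro w
  rw [coeff_add, coeff_part, coeff_part]
  by_cases h : P w <;> simp [h]

lemma support_part_subset {m : ℕ} (f : MvPolynomial (Fin m) K) (P : (Fin m →₀ ℕ) → Prop)
    [DecidablePred P] : (part f P).support ⊆ f.support.filter P := by
  classical
  intro w hw
  rw [MvPolynomial.mem_support_iff, coeff_part] at hw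
  by_cases h : P w
  · simp only [h, if_true] at hw
    exact Finset.mem_filter.2 ⟨MvPolynomial.mem_support_iff.2 hw, h⟩
  · simp [h] at hw

end Stmt15Aux

namespace Stmt15Aux2
open Stmt15Aux
variable {K : Type*} [Field K]

lemma degree_eq_sum_univ {m : ℕ} (u : Fin m →₀ ℕ) : u.degree = ∑ i, u i := by
  rw [Finsupp.degree]
  exact Finset.sum_subset (Finset.subset_univ _)
    (fun x _ hx => by simpa using Finsupp.notMem_support_iff.1 hx)

lemma degree_le_totalDegree {m : ℕ} {f : MvPolynomial (Fin m) K} {u : Fin m →₀ ℕ}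
    (h : u ∈ f.support) : u.degree ≤ f.totalDegree := by
  have := MvPolynomial.le_totalDegree h
  rwa [show u.sum (fun _ e => e) = u.degree from rfl] at this

lemma pair_le_degree {m : ℕ} (u : Fin m →₀ ℕ) {i j : Fin m} (h : i ≠ j) :
    u i + u j ≤ u.degree := by
  rw [degree_eq_sum_univ]
  calc u i + u j = ∑ x ∈ ({i, j} : Finset (Fin m)), u x := (Finset.sum_pair h).symm
    _ ≤ ∑ x, u x := Finset.sum_le_sum_of_subset (Finset.subset_univ _)

lemma mem_support_X_pow_mul {m : ℕ} {j : Fin m} {N : ℕ} {f : MvPolynomial (Fin m) K}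
    {v : Fin m →₀ ℕ} (hv : v ∈ (X j ^ N * f).support) :
    ∃ u ∈ f.support, v = Finsupp.single j N + u := by
  classical
  have h := MvPolynomial.support_mul (X j ^ N) f hv
  rw [MvPolynomial.support_X_pow] at h
  rw [Finset.mem_add] at h
  obtain ⟨a, ha, c, hc, rfl⟩ := h
  rw [Finset.mem_singleton] at ha
  exact ⟨c, hc, by rw [ha]⟩

lemma totalDegree_s_pow {m N : ℕ} : ((∑ i : Fin m, X i : MvPolynomial (Fin m) K) ^ N).totalDegree ≤ N := by
  calc ((∑ i : Fin m, X i : MvPolynomial (Fin m) K) ^ N).totalDegree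
      ≤ N * (∑ i : Fin m, X i : MvPolynomial (Fin m) K).totalDegree := totalDegree_pow _ _
    _ ≤ N * 1 := Nat.mul_le_mul_left _ (le_trans (totalDegree_finset_sum _ _)
        (Finset.sup_le (fun i _ => le_of_eq (totalDegree_X i))))
    _ = N := mul_one N

lemma mem_support_mul {m : ℕ} {f g : MvPolynomial (Fin m) K} {v : Fin m →₀ ℕ}
    (hv : v ∈ (f * g).support) : ∃ u ∈ f.support, ∃ c ∈ g.support, v = u + c := by
  classical
  have h := MvPolynomial.support_mul f g hv
  rw [Finset.mem_add] at h
  obtain ⟨a, ha, c, hc, rfl⟩ := h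
  exact ⟨a, ha, c, hc, rfl⟩

theorem core {p m k e : ℕ} [Fact p.Prime] [CharP K p] (hm : 2 ≤ m) (hk : m ≤ k)
    (hq : m * k + (k + 1) = p ^ e) (Γ : MvPolynomial (Fin m) K)
    (hdeg : Γ.totalDegree ≤ k - m)
    (hbig : ∀ v ∈ (Γ * (∑ i : Fin m, X i) ^ (m * k)).support, ∃ i, m * k ≤ v i) :
    Γ = 0 := by
  classical
  set s : MvPolynomial (Fin m) K := ∑ i : Fin m, X i with hs
  set b : ℕ := m * k with hb
  set P : MvPolynomial (Fin m) K := Γ * s ^ b with hP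
  have h2k : 2 * k ≤ b := by rw [hb]; exact Nat.mul_le_mul_right k hm
  have hqb : p ^ e = b + (k + 1) := hq.symm
  have htdP : P.totalDegree ≤ (k - m) + b :=
    le_trans (totalDegree_mul _ _) (add_le_add hdeg totalDegree_s_pow)
  -- main identity for each coordinate
  have main : ∀ i : Fin m, X i ^ (p ^ e) * Γ = part P (fun v => b ≤ v i) * s ^ (k + 1) := by
    intro i
    have E : (∑ j : Fin m, X j ^ (p ^ e) * Γ)
        = part P (fun v => b ≤ v i) * s ^ (k + 1) + part P (fun v => ¬ b ≤ v i) * s ^ (k + 1) := by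
      rw [← add_mul, part_add_part_not, hP, mul_assoc, ← pow_add, hq,
        sum_pow_char_pow, Finset.mul_sum]
      exact Finset.sum_congr rfl (fun j _ => mul_comm _ _)
    apply MvPolynomial.ext
    intro v
    by_cases hvb : b ≤ v i
    · -- big coordinate case
      have hQ0 : coeff v (part P (fun v => ¬ b ≤ v i) * s ^ (k + 1)) = 0 := by
        by_contra hne
        obtain ⟨u, hu, c, hc, rfl⟩ := mem_support_mul (MvPolynomial.mem_support_iff.2 hne)
        have hu' := support_part_subset _ _ hu
        rw [Finset.mem_filter] at hu'
        obtain ⟨huP, hui⟩ := hu'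
        obtain ⟨j, hj⟩ := hbig u huP
        have hji : j ≠ i := by intro hji; rw [hji] at hj; exact hui hj
        have hpair : u j + u i ≤ (k - m) + b :=
          le_trans (pair_le_degree u hji) (le_trans (degree_le_totalDegree huP) htdP)
        have hci : c i ≤ k + 1 :=
          le_trans (Finsupp.le_degree i c) (le_trans (degree_le_totalDegree hc) totalDegree_s_pow)
        have : (u + c) i < b := by
          rw [Finsupp.add_apply]
          omega
        omega
      have hj0 : ∀ j : Fin m, j ≠ i → coeff v (X j ^ (p ^ e) * Γ) = 0 := by
        intro j hji
        by_contra hne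
        obtain ⟨u, hu, hvu⟩ := mem_support_X_pow_mul (MvPolynomial.mem_support_iff.2 hne)
        have hui : u i ≤ k - m :=
          le_trans (Finsupp.le_degree i u) (le_trans (degree_le_totalDegree hu) hdeg)
        have : v i = u i := by
          rw [hvu, Finsupp.add_apply, Finsupp.single_apply, if_neg hji, zero_add]
        omega
      have Ec := congrArg (MvPolynomial.coeff v) E
      rw [MvPolynomial.coeff_sum, MvPolynomial.coeff_add, hQ0, add_zero,
        Finset.sum_eq_single i (fun j _ hji => hj0 j hji) (fun h => absurd (Finset.mem_univ i) h)]
        at Ec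
      exact Ec
    · -- small coordinate case: both sides are 0
      have hL : coeff v (X i ^ (p ^ e) * Γ) = 0 := by
        by_contra hne
        obtain ⟨u, hu, hvu⟩ := mem_support_X_pow_mul (MvPolynomial.mem_support_iff.2 hne)
        have : v i = p ^ e + u i := by
          rw [hvu, Finsupp.add_apply, Finsupp.single_apply, if_pos rfl]
        omega
      have hR : coeff v (part P (fun v => b ≤ v i) * s ^ (k + 1)) = 0 := by
        by_contra hne
        obtain ⟨u, hu, c, hc, hvu⟩ := mem_support_mul (MvPolynomial.mem_support_iff.2 hne)
        have hu' := support_part_subset _ _ hu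
        rw [Finset.mem_filter] at hu'
        have : b ≤ v i := by
          rw [hvu, Finsupp.add_apply]
          exact le_trans hu'.2 (Nat.le_add_right _ _)
        omega
      rw [hL, hR]
  -- now the cancellation argument
  by_contra hΓ
  have hi0 : (0 : ℕ) < m := by omega
  have hi1 : (1 : ℕ) < m := by omega
  set i0 : Fin m := ⟨0, hi0⟩
  set i1 : Fin m := ⟨1, hi1⟩
  have hi01 : i0 ≠ i1 := by
    intro h
    have := congrArg Fin.val h
    simp [i0, i1] at this
  have e0 := main i0
  have e1 := main i1
  have hsne : s ≠ 0 := by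
    have hc : coeff (Finsupp.single i0 1) s = 1 := by
      rw [hs, MvPolynomial.coeff_sum]
      rw [Finset.sum_eq_single i0 (fun j _ hj => by
        rw [MvPolynomial.coeff_X', if_neg (fun h => hj (Finsupp.single_left_injective one_ne_zero h))]
        ) (fun h => absurd (Finset.mem_univ i0) h)]
      exact MvPolynomial.coeff_X_same i0
    intro h0
    rw [h0] at hc
    simp at hc
  have hcross : X i1 ^ (p ^ e) * part P (fun v => b ≤ v i0)
      = X i0 ^ (p ^ e) * part P (fun v => b ≤ v i1) := by
    have h1 : (X i1 ^ (p ^ e) * part P (fun v => b ≤ v i0)) * s ^ (k+1)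
        = (X i0 ^ (p ^ e) * part P (fun v => b ≤ v i1)) * s ^ (k+1) := by
      calc (X i1 ^ (p ^ e) * part P (fun v => b ≤ v i0)) * s ^ (k+1)
          = X i1 ^ (p ^ e) * (part P (fun v => b ≤ v i0) * s ^ (k+1)) := by ring
        _ = X i1 ^ (p ^ e) * (X i0 ^ (p ^ e) * Γ) := by rw [← e0]
        _ = X i0 ^ (p ^ e) * (X i1 ^ (p ^ e) * Γ) := by ring
        _ = X i0 ^ (p ^ e) * (part P (fun v => b ≤ v i1) * s ^ (k+1)) := by rw [← e1]
        _ = (X i0 ^ (p ^ e) * part P (fun v => b ≤ v i1)) * s ^ (k+1) := by ring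
    exact mul_right_cancel₀ (pow_ne_zero _ hsne) h1
  have hP0ne : part P (fun v => b ≤ v i0) ≠ 0 := by
    intro h0
    rw [h0, zero_mul] at e0
    exact (mul_ne_zero (pow_ne_zero _ (MvPolynomial.X_ne_zero i0)) hΓ) e0
  have hX1 : X i1 ^ (p ^ e) * part P (fun v => b ≤ v i0) ≠ 0 :=
    mul_ne_zero (pow_ne_zero _ (MvPolynomial.X_ne_zero i1)) hP0ne
  obtain ⟨v, hv⟩ := Finset.nonempty_iff_ne_empty.2
    (fun h => hX1 (MvPolynomial.support_eq_empty.1 h))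
  -- v ∈ supp (X i1 ^ q * P0) : v i0 small
  obtain ⟨u, hu, hvu⟩ := mem_support_X_pow_mul hv
  have huP : u ∈ P.support := (Finset.mem_filter.1 (support_part_subset _ _ hu)).1
  have hui0 : v i0 ≤ (k - m) + b := by
    have : u i0 ≤ (k - m) + b :=
      le_trans (Finsupp.le_degree i0 u) (le_trans (degree_le_totalDegree huP) htdP)
    have hv0 : v i0 = u i0 := by
      rw [hvu, Finsupp.add_apply, Finsupp.single_apply, if_neg (Ne.symm hi01), zero_add]
    omega
  -- but also v ∈ supp (X i0 ^ q * P1) : v i0 ≥ q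
  rw [hcross] at hv
  obtain ⟨u', hu', hvu'⟩ := mem_support_X_pow_mul hv
  have : p ^ e ≤ v i0 := by
    rw [hvu', Finsupp.add_apply, Finsupp.single_apply, if_pos rfl]
    omega
  omega

end Stmt15Aux2

namespace Stmt15Aux3
open Stmt15Aux Stmt15Aux2
variable {K : Type*} [Field K]

lemma degree_add_tsub {m : ℕ} {c v : Fin m →₀ ℕ} (h : c ≤ v) :
    c.degree + (v - c).degree = v.degree := by
  rw [degree_eq_sum_univ, degree_eq_sum_univ, degree_eq_sum_univ, ← Finset.sum_add_distrib]
  exact Finset.sum_congr rfl (fun i _ => by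
    have := Finsupp.le_def.1 h i
    rw [Finsupp.tsub_apply]
    omega)

set_option synthInstance.maxHeartbeats 1000000 in
/-- Every homogeneous polynomial of degree `(m+1)*((m-1)*k)` lies in the ideal generated by
`(∑ X i)^(m*k)` and the `(X i)^(m*k)`. -/
theorem span_lemma {p m k e : ℕ} [Fact p.Prime] [CharP K p] (hm : 2 ≤ m)
    (hq : m * k + (k + 1) = p ^ e) (F : MvPolynomial (Fin m) K)
    (hF : F.IsHomogeneous ((m + 1) * ((m - 1) * k))) :
    F ∈ Ideal.span ({(∑ i : Fin m, X i) ^ (m * k)}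
      ∪ Set.range (fun i : Fin m => (X i) ^ (m * k)) : Set (MvPolynomial (Fin m) K)) := by
  classical
  set s : MvPolynomial (Fin m) K := ∑ i : Fin m, X i with hs
  set b : ℕ := m * k with hb
  set D : ℕ := (m + 1) * ((m - 1) * k) with hD
  set J : Ideal (MvPolynomial (Fin m) K) :=
    Ideal.span ({s ^ b} ∪ Set.range (fun i : Fin m => (X i) ^ b)) with hJ
  have hXmem : ∀ i : Fin m, (X i : MvPolynomial (Fin m) K) ^ b ∈ J :=
    fun i => Ideal.subset_span (Or.inr ⟨i, rfl⟩)
  have hsmem : s ^ b ∈ J := Ideal.subset_span (Or.inl rfl)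
  -- a monomial with some exponent ≥ b is in J
  have hmono : ∀ (w : Fin m →₀ ℕ) (c : K) (i : Fin m), b ≤ w i → monomial w c ∈ J := by
    intro w c i hbw
    have hle : Finsupp.single i b ≤ w := Finsupp.single_le_iff.2 hbw
    have : monomial w c = monomial (w - Finsupp.single i b) c * X i ^ b := by
      rw [X_pow_eq_monomial, monomial_mul, mul_one, tsub_add_cancel_of_le hle]
    rw [this]
    exact Ideal.mul_mem_left _ _ (hXmem i)
  by_cases hk : k < m
  · -- pigeonhole case
    rw [MvPolynomial.as_sum F]
    apply Ideal.sum_mem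
    intro w hw
    have hwd : w.degree = D := by
      by_contra hne
      exact MvPolynomial.mem_support_iff.1 hw (hF.coeff_eq_zero hne)
    rcases Nat.eq_zero_or_pos b with hb0 | hb1
    · exact hmono w _ ⟨0, by omega⟩ (by omega)
    have : ∃ i, b ≤ w i := by
      by_contra hno
      push_neg at hno
      have hsum : w.degree ≤ m * (b - 1) := by
        rw [degree_eq_sum_univ]
        calc ∑ i, w i ≤ ∑ _i : Fin m, (b - 1) :=
              Finset.sum_le_sum (fun i _ => by have := hno i; omega)
          _ = m * (b - 1) := by rw [Finset.sum_const, Finset.card_univ, Fintype.card_fin,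
              smul_eq_mul]
      have harith : m * (b - 1) < D := by
        have h1 : 1 ≤ m * k := hb ▸ hb1
        have h2 : 1 ≤ m := by omega
        have h3 : k < m := hk
        rw [hD, hb]
        zify [h1, h2]
        have key : ((m:ℤ)+1)*(((m:ℤ)-1)*k) - (m:ℤ)*((m:ℤ)*k-1) = (m:ℤ) - k := by ring
        have : (k:ℤ) < m := by exact_mod_cast h3
        linarith
      omega
    obtain ⟨i, hi⟩ := this
    exact hmono w _ i hi
  · -- duality case
    push_neg at hk  -- m ≤ k
    have hb1 : 1 ≤ b := by
      rw [hb]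
      have : 1 * 1 ≤ m * k := Nat.mul_le_mul (by omega) (by omega)
      omega
    set km : ℕ := k - m with hkm
    set β : Fin m →₀ ℕ := Finsupp.equivFunOnFinite.symm (fun _ : Fin m => b - 1) with hβ
    have hβapp : ∀ i, β i = b - 1 := fun i => rfl
    have hβdeg : β.degree = m * (b - 1) := by
      rw [degree_eq_sum_univ]
      simp [hβapp, Finset.sum_const, Finset.card_univ, mul_comm]
    have harith2 : m * (b - 1) = D + km := by
      have h1 : 1 ≤ m * k := hb ▸ hb1
      rw [hD, hb, hkm]
      zify [h1, show m ≤ k from hk, show 1 ≤ m by omega]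
      ring
    -- duality setup
    set G : Set (MvPolynomial (Fin m) K) :=
      {g | ∃ u i, g = monomial u 1 * X i ^ b} ∪ {g | ∃ u, g = monomial u 1 * s ^ b} with hG
    have hGJ : ∀ g ∈ G, g ∈ J := by
      rintro g (⟨u, i, rfl⟩ | ⟨u, rfl⟩)
      · exact Ideal.mul_mem_left _ _ (hXmem i)
      · exact Ideal.mul_mem_left _ _ hsmem
    have hWJ : ∀ x ∈ Submodule.span K G, x ∈ J := by
      intro x hx
      induction hx using Submodule.span_induction with
      | mem g hg => exact hGJ g hg
      | zero => exact J.zero_mem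
      | add _ _ _ _ h1 h2 => exact J.add_mem h1 h2
      | smul r y _ hy => rw [MvPolynomial.smul_eq_C_mul]; exact Ideal.mul_mem_left _ _ hy
    refine hWJ F ?_
    by_contra hFW
    obtain ⟨φ, hφF, hφmap⟩ := Submodule.exists_dual_map_eq_bot_of_notMem hFW inferInstance
    set lam : (Fin m →₀ ℕ) → K := fun w => φ (monomial w 1) with hlamdef
    have hφ0 : ∀ g ∈ G, φ g = 0 := by
      intro g hg
      have hmem : φ g ∈ Submodule.map φ (Submodule.span K G) :=
        Submodule.mem_map_of_mem (Submodule.subset_span hg)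
      rw [hφmap] at hmem
      exact (Submodule.mem_bot K).1 hmem
    have hbox : ∀ (w : Fin m →₀ ℕ) (i : Fin m), b ≤ w i → lam w = 0 := by
      intro w i hbw
      have hle : Finsupp.single i b ≤ w := Finsupp.single_le_iff.2 hbw
      have hmono' : monomial w (1:K) = monomial (w - Finsupp.single i b) 1 * X i ^ b := by
        rw [X_pow_eq_monomial, monomial_mul, mul_one, tsub_add_cancel_of_le hle]
      rw [hlamdef]
      simp only
      rw [hmono']
      exact hφ0 _ (Or.inl ⟨_, i, rfl⟩)
    have hsrow : ∀ u : Fin m →₀ ℕ,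
        ∑ c ∈ (s ^ b).support, coeff c (s ^ b) * lam (u + c) = 0 := by
      intro u
      have h0 : φ (monomial u 1 * s ^ b) = 0 := hφ0 _ (Or.inr ⟨u, rfl⟩)
      have hexp : monomial u (1:K) * s ^ b
          = ∑ c ∈ (s ^ b).support, monomial (u + c) (coeff c (s ^ b)) := by
        conv_lhs => rw [MvPolynomial.as_sum (s ^ b)]
        rw [Finset.mul_sum]
        exact Finset.sum_congr rfl (fun c _ => by rw [monomial_mul, one_mul])
      rw [hexp, map_sum] at h0
      rw [← h0]
      refine Finset.sum_congr rfl (fun c _ => ?_)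
      rw [show monomial (u + c) (coeff c (s ^ b)) = (coeff c (s ^ b)) • monomial (u + c) (1:K) by
        rw [smul_monomial, smul_eq_mul, mul_one], map_smul, smul_eq_mul]
    -- the dual polynomial Γ
    set γ : Fin m →₀ ℕ := Finsupp.equivFunOnFinite.symm (fun _ : Fin m => km) with hγ
    set U : Finset (Fin m →₀ ℕ) := (Finset.Iic γ).filter (fun u => u.degree = km) with hU
    have hUmem : ∀ u, u ∈ U ↔ u.degree = km := by
      intro u
      rw [hU, Finset.mem_filter]
      constructor
      · exact fun h => h.2
      · intro h
        refine ⟨Finset.mem_Iic.2 (Finsupp.le_def.2 (fun i => ?_)), h⟩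
        have := Finsupp.le_degree i u
        rw [h] at this
        exact this
    set Γ : MvPolynomial (Fin m) K := ∑ u ∈ U, monomial u (lam (β - u)) with hΓdef
    have hcoeffΓ : ∀ w, coeff w Γ = if w.degree = km then lam (β - w) else 0 := by
      intro w
      rw [hΓdef, MvPolynomial.coeff_sum]
      simp only [coeff_monomial]
      rw [Finset.sum_ite_eq' U w (fun u => lam (β - u))]
      by_cases hw : w.degree = km
      · rw [if_pos ((hUmem w).2 hw), if_pos hw]
      · rw [if_neg (fun hmem => hw ((hUmem w).1 hmem)), if_neg hw]
    have hΓhom : Γ.IsHomogeneous km := by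
      rw [← mem_homogeneousSubmodule, hΓdef]
      apply Submodule.sum_mem
      intro u hu
      rw [mem_homogeneousSubmodule]
      exact isHomogeneous_monomial _ ((hUmem u).1 hu)
    have hshom : s.IsHomogeneous 1 := by
      rw [← mem_homogeneousSubmodule, hs]
      apply Submodule.sum_mem
      intro i _
      rw [mem_homogeneousSubmodule]
      exact isHomogeneous_X K i
    have hsbhom : (s ^ b).IsHomogeneous b := by
      have := hshom.pow b
      rwa [one_mul] at this
    have hprodhom : (Γ * s ^ b).IsHomogeneous (km + b) := hΓhom.mul hsbhom
    have hsuppdeg : ∀ c ∈ (s ^ b).support, c.degree = b := by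
      intro c hc
      by_contra hne
      exact MvPolynomial.mem_support_iff.1 hc (hsbhom.coeff_eq_zero hne)
    -- Γ * s^b has all monomials with some big exponent
    have hbigΓ : ∀ v ∈ (Γ * s ^ b).support, ∃ i, b ≤ v i := by
      intro v hv
      by_contra hno
      push_neg at hno
      have hvβ : v ≤ β := Finsupp.le_def.2 (fun i => by have := hno i; rw [hβapp]; omega)
      have hvdeg : v.degree = km + b := by
        by_contra hne
        exact MvPolynomial.mem_support_iff.1 hv (hprodhom.coeff_eq_zero hne)
      apply MvPolynomial.mem_support_iff.1 hv
      have hexpand : coeff v (Γ * s ^ b)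
          = ∑ u ∈ U, (if u ≤ v then lam (β - u) * coeff (v - u) (s ^ b) else 0) := by
        rw [hΓdef, Finset.sum_mul, MvPolynomial.coeff_sum]
        exact Finset.sum_congr rfl (fun u _ => by rw [coeff_monomial_mul'])
      have h0 : ∑ c ∈ (s ^ b).support, coeff c (s ^ b) * lam ((β - v) + c) = 0 := hsrow (β - v)
      have hrestrict : ∑ c ∈ (s ^ b).support, coeff c (s ^ b) * lam ((β - v) + c)
          = ∑ c ∈ (s ^ b).support.filter (fun c => c ≤ v),
              coeff c (s ^ b) * lam ((β - v) + c) := by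
        symm
        apply Finset.sum_subset (Finset.filter_subset _ _)
        intro c hc hcf
        have hnle : ¬ c ≤ v := fun h => hcf (Finset.mem_filter.2 ⟨hc, h⟩)
        obtain ⟨i, hi⟩ : ∃ i, v i < c i := by
          by_contra hno2
          push_neg at hno2
          exact hnle (Finsupp.le_def.2 hno2)
        have hbig' : b ≤ ((β - v) + c) i := by
          rw [Finsupp.add_apply, Finsupp.tsub_apply, hβapp]
          have := hno i
          omega
        rw [hbox _ i hbig', mul_zero]
      have hfilterL : ∑ u ∈ U, (if u ≤ v then lam (β - u) * coeff (v - u) (s ^ b) else 0)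
          = ∑ u ∈ U.filter (fun u => u ≤ v), lam (β - u) * coeff (v - u) (s ^ b) :=
        (Finset.sum_filter _ _).symm
      have hfilterL2 : ∑ u ∈ U.filter (fun u => u ≤ v), lam (β - u) * coeff (v - u) (s ^ b)
          = ∑ u ∈ (U.filter (fun u => u ≤ v)).filter (fun u => (v - u) ∈ (s ^ b).support),
              lam (β - u) * coeff (v - u) (s ^ b) := by
        symm
        apply Finset.sum_subset (Finset.filter_subset _ _)
        intro u hu huf
        have : (v - u) ∉ (s ^ b).support := fun h => huf (Finset.mem_filter.2 ⟨hu, h⟩)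
        rw [MvPolynomial.notMem_support_iff.1 this, mul_zero]
      have hbij : ∑ u ∈ (U.filter (fun u => u ≤ v)).filter (fun u => (v - u) ∈ (s ^ b).support),
              lam (β - u) * coeff (v - u) (s ^ b)
          = ∑ c ∈ (s ^ b).support.filter (fun c => c ≤ v),
              coeff c (s ^ b) * lam ((β - v) + c) := by
        apply Finset.sum_nbij' (i := fun u => v - u) (j := fun c => v - c)
        · intro u hu
          rw [Finset.mem_filter] at hu
          obtain ⟨hu1, hu2⟩ := hu
          exact Finset.mem_filter.2 ⟨hu2, tsub_le_self⟩
        · intro c hc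
          rw [Finset.mem_filter] at hc
          obtain ⟨hc1, hc2⟩ := hc
          have hcd : c.degree = b := hsuppdeg c hc1
          have hvc : (v - c).degree = km := by
            have := degree_add_tsub hc2
            omega
          refine Finset.mem_filter.2 ⟨Finset.mem_filter.2 ⟨(hUmem _).2 hvc, tsub_le_self⟩, ?_⟩
          rwa [tsub_tsub_cancel_of_le hc2]
        · intro u hu
          rw [Finset.mem_filter, Finset.mem_filter] at hu
          exact tsub_tsub_cancel_of_le hu.1.2
        · intro c hc
          rw [Finset.mem_filter] at hc
          exact tsub_tsub_cancel_of_le hc.2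
        · intro u hu
          rw [Finset.mem_filter, Finset.mem_filter] at hu
          obtain ⟨⟨hu1, hu2⟩, hu3⟩ := hu
          rw [mul_comm]
          congr 1
          congr 1
          ext i
          rw [Finsupp.add_apply, Finsupp.tsub_apply, Finsupp.tsub_apply, Finsupp.tsub_apply,
            hβapp]
          have h1 := Finsupp.le_def.1 hu2 i
          have h2 := Finsupp.le_def.1 hvβ i
          rw [hβapp] at h2
          omega
      rw [hexpand, hfilterL, hfilterL2, hbij, ← hrestrict, h0]
    -- apply the core lemma
    have hΓ0 : Γ = 0 := by
      refine core hm hk hq Γ ?_ ?_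
      · rw [← hkm]
        exact hΓhom.totalDegree_le
      · rw [← hb]
        exact hbigΓ
    -- all dual coefficients vanish in degree D
    have hlamvanish : ∀ w : Fin m →₀ ℕ, w.degree = D → lam w = 0 := by
      intro w hwD
      by_cases hex : ∃ i, b ≤ w i
      · obtain ⟨i, hi⟩ := hex
        exact hbox w i hi
      · push_neg at hex
        have hwβ : w ≤ β := Finsupp.le_def.2 (fun i => by have := hex i; rw [hβapp]; omega)
        have hwu : (β - w).degree = km := by
          have h1 := degree_add_tsub hwβ
          rw [hwD, hβdeg] at h1
          omega
        have : coeff (β - w) Γ = lam w := by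
          rw [hcoeffΓ, if_pos hwu, tsub_tsub_cancel_of_le hwβ]
        rw [← this, hΓ0, MvPolynomial.coeff_zero]
    -- contradiction: φ F = 0
    exact absurd (by
      conv_lhs => rw [MvPolynomial.as_sum F]
      rw [map_sum]
      apply Finset.sum_eq_zero
      intro w hw
      have hwD : w.degree = D := by
        by_contra hne
        exact MvPolynomial.mem_support_iff.1 hw (hF.coeff_eq_zero hne)
      rw [show monomial w (coeff w F) = (coeff w F) • monomial w (1:K) by
        rw [smul_monomial, smul_eq_mul, mul_one], map_smul, smul_eq_mul]
      rw [show φ (monomial w (1:K)) = lam w from rfl, hlamvanish w hwD, mul_zero] : φ F = 0) hφF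

end Stmt15Aux3

open Stmt15Aux2 Stmt15Aux3 in
theorem stmt_15 (K : Type*) [Field K] (p n e k : ℕ) [Fact p.Prime] [CharP K p]
    (hn : 3 ≤ n) (hpn : ¬ p ∣ n) (hq : p ^ e = n * k + 1)
    (R : Type*) [CommRing R]
    (f : MvPolynomial (Fin n) K →+* R) (hf : Function.Surjective f)
    (hker : RingHom.ker f = Ideal.span {∑ i : Fin n, X i ^ n})
    (x : Fin n → R) (hx : ∀ i, x i = f (X i)) :
    (∏ i, x i) ^ ((n - 2) * p ^ e + 1) ∈
      Ideal.span (Set.range fun i : Fin n => x i ^ ((n - 1) * p ^ e)) := by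
  classical
  obtain ⟨m, rfl⟩ : ∃ m, n = m + 1 := ⟨n - 1, by omega⟩
  have hm : 2 ≤ m := by omega
  set S := MvPolynomial (Fin (m + 1)) K
  set q : ℕ := p ^ e with hqdef
  have hq1 : q = (m + 1) * k + 1 := hq
  have hq' : m * k + (k + 1) = p ^ e := by
    have h1 : (m + 1) * k = m * k + k := by ring
    omega
  set a : ℕ := (m - 1) * k with ha
  set b : ℕ := m * k with hb
  set g : S := ∑ i : Fin (m + 1), X i ^ (m + 1) with hg
  set J : Ideal S := Ideal.span ({g} ∪ Set.range (fun i : Fin (m + 1) => (X i : S) ^ (m * q)))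
    with hJ
  set W : S := ∏ i : Fin (m + 1), X i ^ m with hW
  set σ : S := ∑ i : Fin m, (X i.castSucc : S) ^ (m + 1) with hσ
  have hgJ : g ∈ J := Ideal.subset_span (Or.inl rfl)
  have hXJ : ∀ i : Fin (m + 1), (X i : S) ^ (m * q) ∈ J :=
    fun i => Ideal.subset_span (Or.inr ⟨i, rfl⟩)
  -- σ + X_last^(m+1) = g
  have hσg : σ + X (Fin.last m) ^ (m + 1) = g := by
    rw [hg, hσ, Fin.sum_univ_castSucc]
  have hcong : ∀ N : ℕ, ∃ h : S, σ ^ N = (-1 : S) ^ N * X (Fin.last m) ^ ((m + 1) * N) + g * h := by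
    intro N
    obtain ⟨h, hh⟩ := (show (g : S) ∣ σ ^ N - (-(X (Fin.last m) ^ (m + 1))) ^ N by
      have := sub_dvd_pow_sub_pow σ (-(X (Fin.last m) ^ (m + 1))) N
      rwa [sub_neg_eq_add, hσg] at this)
    refine ⟨h, ?_⟩
    have : (-(X (Fin.last m) ^ (m + 1))) ^ N = (-1 : S) ^ N * X (Fin.last m) ^ ((m + 1) * N) := by
      rw [neg_pow, pow_mul]
    rw [← this]
    rw [sub_eq_iff_eq_add] at hh
    rw [hh]
    ring
  -- multiplier times generators
  have hWX : ∀ i : Fin (m + 1), W * (X i : S) ^ ((m + 1) * b) ∈ J := by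
    intro i
    have hexp : m + (m + 1) * b = m * q := by rw [hb, hq1]; ring
    have : W * (X i : S) ^ ((m + 1) * b)
        = (∏ j ∈ Finset.univ.erase i, (X j : S) ^ m) * (X i : S) ^ (m * q) := by
      rw [hW, ← Finset.mul_prod_erase _ _ (Finset.mem_univ i), ← hexp, pow_add]
      ring
    rw [this]
    exact Ideal.mul_mem_left _ _ (hXJ i)
  have hWσ : W * σ ^ b ∈ J := by
    obtain ⟨h, hh⟩ := hcong b
    rw [hh]
    have h1 : W * ((-1 : S) ^ b * X (Fin.last m) ^ ((m + 1) * b) + g * h)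
        = (-1 : S) ^ b * (W * X (Fin.last m) ^ ((m + 1) * b)) + (W * h) * g := by ring
    rw [h1]
    exact J.add_mem (Ideal.mul_mem_left _ _ (hWX (Fin.last m))) (Ideal.mul_mem_left _ _ hgJ)
  -- the span lemma applied upstairs
  set Zs : MvPolynomial (Fin m) K := ∑ i : Fin m, X i with hZs
  set F : MvPolynomial (Fin m) K := ((∏ i : Fin m, X i) * Zs) ^ a with hF
  have hFhom : F.IsHomogeneous ((m + 1) * ((m - 1) * k)) := by
    have h1 : (∏ i : Fin m, (X i : MvPolynomial (Fin m) K)).IsHomogeneous m := by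
      have := IsHomogeneous.prod Finset.univ (fun i : Fin m => (X i : MvPolynomial (Fin m) K))
        (fun _ => 1) (fun i _ => isHomogeneous_X K i)
      simpa using this
    have h2 : Zs.IsHomogeneous 1 := by
      rw [← mem_homogeneousSubmodule, hZs]
      exact Submodule.sum_mem _ (fun i _ => (mem_homogeneousSubmodule _ _).2 (isHomogeneous_X K i))
    have h3 := (h1.mul h2).pow a
    rw [hF]
    convert h3 using 1
  have hFmem := span_lemma (p := p) (e := e) hm hq' F hFhom
  -- push through ψ and multiply by W
  set ψ : MvPolynomial (Fin m) K →ₐ[K] S :=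
    aeval (fun i : Fin m => (X i.castSucc : S) ^ (m + 1)) with hψ
  have hψs : ψ Zs = σ := by
    rw [hZs, hσ, map_sum]
    exact Finset.sum_congr rfl (fun i _ => by rw [hψ, aeval_X])
  have hWψF : W * ψ F ∈ J := by
    refine Submodule.span_induction (p := fun y _ => W * ψ y ∈ J) ?_ ?_ ?_ ?_ hFmem
    · intro y hy
      rcases hy with hy | ⟨i, rfl⟩
      · rw [Set.mem_singleton_iff] at hy
        rw [hy, map_pow, hψs]
        exact hWσ
      · rw [map_pow, hψ, aeval_X, ← pow_mul]
        exact hWX i.castSucc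
    · show W * ψ 0 ∈ J
      rw [map_zero, mul_zero]; exact J.zero_mem
    · intro y z _ _ hy hz
      rw [map_add, mul_add]; exact J.add_mem hy hz
    · intro r y _ hy
      rw [smul_eq_mul, map_mul, show W * (ψ r * ψ y) = ψ r * (W * ψ y) by ring]
      exact Ideal.mul_mem_left _ _ hy
  -- compute ψ F and extract the target
  set Pm : S := ∏ i : Fin m, (X i.castSucc : S) ^ (m + 1) with hPm
  have hψF : ψ F = Pm ^ a * σ ^ a := by
    rw [hF, map_pow, map_mul, hψs, hPm, map_prod, mul_pow]
    congr 1
    exact congrArg (· ^ a) (Finset.prod_congr rfl (fun i _ => by rw [hψ, aeval_X]))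
  obtain ⟨h, hh⟩ := hcong a
  set E : S := ∏ i : Fin (m + 1), (X i : S) ^ ((m + 1) * a) with hE
  have hEeq : E = Pm ^ a * X (Fin.last m) ^ ((m + 1) * a) := by
    rw [hE, Fin.prod_univ_castSucc, hPm, ← Finset.prod_pow]
    congr 1
    exact Finset.prod_congr rfl (fun i _ => by rw [pow_mul])
  have hTE : W * E ∈ J := by
    set u : S := (-1 : S) ^ a with hu
    have hsq : u * u = 1 := by
      rw [hu, ← pow_add]
      exact Even.neg_one_pow ⟨a, by ring⟩
    have h2 : ψ F = u * E + Pm ^ a * g * h := by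
      rw [hψF, hh, hEeq, hu]; ring
    have h4 : W * E = u * (W * ψ F) - (u * (Pm ^ a * W * h)) * g := by
      linear_combination (-(u * W)) * h2 - (W * E) * hsq
    rw [h4]
    refine J.sub_mem ?_ ?_
    · exact Ideal.mul_mem_left _ _ hWψF
    · exact Ideal.mul_mem_left _ _ hgJ
  have hT : (∏ i : Fin (m + 1), (X i : S) ^ ((m - 1) * q + 1)) ∈ J := by
    have hexp : m + (m + 1) * a = (m - 1) * q + 1 := by
      rw [ha, hq1]
      zify [show 1 ≤ m by omega]
      ring
    have heq : (∏ i : Fin (m + 1), (X i : S) ^ ((m - 1) * q + 1)) = W * E := by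
      rw [hW, hE, ← Finset.prod_mul_distrib]
      exact Finset.prod_congr rfl (fun i _ => by rw [← pow_add, hexp])
    rw [heq]
    exact hTE
  -- push through f
  have hfg : f g = 0 := by
    have : g ∈ RingHom.ker f := by
      rw [hker]
      exact Ideal.mem_span_singleton_self g
    exact this
  have hfT : f (∏ i : Fin (m + 1), (X i : S) ^ ((m - 1) * q + 1))
      ∈ Ideal.span (Set.range fun i : Fin (m + 1) => x i ^ (m * q)) := by
    refine Submodule.span_induction
      (p := fun y _ => f y ∈ Ideal.span (Set.range fun i : Fin (m + 1) => x i ^ (m * q)))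
      ?_ ?_ ?_ ?_ hT
    · intro y hy
      rcases hy with hy | ⟨i, rfl⟩
      · rw [Set.mem_singleton_iff] at hy
        rw [hy, hfg]
        exact Ideal.zero_mem _
      · rw [map_pow, ← hx]
        exact Ideal.subset_span ⟨i, rfl⟩
    · show f 0 ∈ Ideal.span (Set.range fun i : Fin (m + 1) => x i ^ (m * q))
      rw [map_zero]; exact Ideal.zero_mem _
    · intro y z _ _ hy hz
      rw [map_add]; exact Ideal.add_mem _ hy hz
    · intro r y _ hy
      rw [smul_eq_mul, map_mul]
      exact Ideal.mul_mem_left _ _ hy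
  have hn2 : m + 1 - 2 = m - 1 := by omega
  have hn1 : m + 1 - 1 = m := by omega
  rw [hn2, hn1]
  have hgoal : (∏ i, x i) ^ ((m - 1) * p ^ e + 1) = ∏ i : Fin (m + 1), x i ^ ((m - 1) * q + 1) := by
    rw [← Finset.prod_pow, hqdef]
  rw [hgoal]
  have hfprod : f (∏ i : Fin (m + 1), (X i : S) ^ ((m - 1) * q + 1))
      = ∏ i : Fin (m + 1), x i ^ ((m - 1) * q + 1) := by
    rw [map_prod]
    exact Finset.prod_congr rfl (fun i _ => by rw [map_pow, ← hx])
  rw [← hfprod]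
  exact hfT
end

section
/- Let p be a prime with p = 6m+5, m ≥ 0. Let M be the (m+1)×(m+1) matrix whose (i,j) entry, for 0 ≤ i,j ≤ m, is C(6m+3-2i, 3m+2-i+j). Then det M is nonzero modulo p; equivalently, in the notation F(n,a,k) for the determinant of the (k+1)×(k+1) matrix with (i,j) entry C(n+2i, a+i+j), the determinant F(4m+3, 2m+2, m) is nonzero mod p. -/
open Polynomial Finset

theorem stmt_17 (p m : ℕ) [Fact p.Prime] (hp : p = 6 * m + 5) :
    (Matrix.of fun i j : Fin (m + 1) =>
        (((4 * m + 3 + 2 * (i : ℕ)).choose (2 * m + 2 + (i : ℕ) + (j : ℕ)) : ZMod p))).det ≠ 0 := by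
  intro hdet
  obtain ⟨c, hc0, hcM⟩ := Matrix.exists_vecMul_eq_zero_iff.mpr hdet
  have hrow : ∀ j : Fin (m+1), ∑ i : Fin (m+1),
      c i * (((4*m+3+2*(i:ℕ)).choose (2*m+2+(i:ℕ)+(j:ℕ)) : ZMod p)) = 0 := by
    intro j
    have := congrFun hcM j
    simpa [Matrix.vecMul, dotProduct] using this
  set g : (ZMod p)[X] := ∑ i : Fin (m+1), C (c i) * ((X+1)^(2*(i:ℕ)) * X^(m-(i:ℕ))) with hgdef
  set P : (ZMod p)[X] := (X+1)^(4*m+3) * g with hPdef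
  have hfin : ∀ i : Fin (m+1), (i : ℕ) ≤ m := fun i => Nat.lt_succ_iff.mp i.isLt
  have hPsum : P = ∑ i : Fin (m+1), C (c i) * ((X+1)^(4*m+3+2*(i:ℕ)) * X^(m-(i:ℕ))) := by
    rw [hPdef, hgdef, Finset.mul_sum]
    refine Finset.sum_congr rfl fun i _ => ?_
    ring
  have hPcoeff : ∀ k : ℕ, m ≤ k → P.coeff k
      = ∑ i : Fin (m+1), c i * (((4*m+3+2*(i:ℕ)).choose (k - m + (i:ℕ)) : ZMod p)) := by
    intro k hk
    rw [hPsum, finset_sum_coeff]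
    refine Finset.sum_congr rfl fun i _ => ?_
    have hi := hfin i
    rw [← mul_assoc, coeff_mul_X_pow', if_pos (by omega), coeff_C_mul,
      coeff_X_add_one_pow]
    have : k - (m - (i:ℕ)) = k - m + (i:ℕ) := by omega
    rw [this]
  have hmid : ∀ k : ℕ, 2*m+1 ≤ k → k ≤ 4*m+2 → P.coeff k = 0 := by
    intro k hk1 hk2
    rw [hPcoeff k (by omega)]
    by_cases hk3 : 3*m+2 ≤ k
    · have h := hrow ⟨k - (3*m+2), by omega⟩
      simp only [Fin.val_mk] at h
      rw [← h]
      refine Finset.sum_congr rfl fun i _ => ?_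
      have hi := hfin i
      congr 3
      omega
    · have h := hrow ⟨3*m+1 - k, by omega⟩
      simp only [Fin.val_mk] at h
      rw [← h]
      refine Finset.sum_congr rfl fun i _ => ?_
      have hi := hfin i
      have h1 : (4*m+3+2*(i:ℕ)) - (2*m+2+(i:ℕ)+(3*m+1-k)) = k - m + (i:ℕ) := by omega
      rw [← Nat.choose_symm (show 2*m+2+(i:ℕ)+(3*m+1-k) ≤ 4*m+3+2*(i:ℕ) by omega), h1]
  -- g ≠ 0
  have hgne : g ≠ 0 := by
    obtain ⟨i₁, hi₁'⟩ := Function.ne_iff.mp hc0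
    have hi₁ : c i₁ ≠ 0 := by simpa using hi₁'
    set S : Finset (Fin (m+1)) := Finset.univ.filter (fun i => c i ≠ 0) with hS
    have hSne : S.Nonempty := ⟨i₁, by simp [hS, hi₁]⟩
    set i₀ := S.max' hSne with hi₀def
    have hmem : c i₀ ≠ 0 := by
      have := S.max'_mem hSne
      simp [hS] at this
      exact this
    have hcoeff : g.coeff (m - (i₀:ℕ)) = c i₀ := by
      rw [hgdef, finset_sum_coeff]
      rw [Finset.sum_eq_single i₀]
      · rw [← mul_assoc, coeff_mul_X_pow', if_pos le_rfl, Nat.sub_self, coeff_C_mul,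
          coeff_X_add_one_pow, Nat.choose_zero_right, Nat.cast_one, mul_one]
      · intro i _ hne
        rcases lt_or_gt_of_ne hne with hlt | hgt
        · rw [← mul_assoc, coeff_mul_X_pow', if_neg]
          have h1 : (i:ℕ) < (i₀:ℕ) := hlt
          have := hfin i₀
          omega
        · have hci : c i = 0 := by
            by_contra hci
            exact absurd (S.le_max' i (by simp [hS, hci])) (not_le.mpr hgt)
          simp [hci]
      · simp
    intro hg0
    rw [hg0, coeff_zero] at hcoeff
    exact hmem hcoeff.symm
  have hX1 : (X + 1 : (ZMod p)[X]) = X + C 1 := by rw [C_1]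
  have hX1ne : (X + 1 : (ZMod p)[X]) ≠ 0 := by
    rw [hX1]; exact (monic_X_add_C 1).ne_zero
  have hX1deg : (X + 1 : (ZMod p)[X]).natDegree = 1 := by rw [hX1, natDegree_X_add_C]
  have hgdeg : g.natDegree ≤ 2*m := by
    rw [hgdef]
    refine natDegree_sum_le_of_forall_le _ _ fun i _ => ?_
    have hi := hfin i
    calc (C (c i) * (((X+1):(ZMod p)[X])^(2*(i:ℕ)) * X^(m-(i:ℕ)))).natDegree
        ≤ (C (c i)).natDegree + ((((X+1):(ZMod p)[X])^(2*(i:ℕ)) * X^(m-(i:ℕ)))).natDegree := natDegree_mul_le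
      _ ≤ 0 + ((((X+1):(ZMod p)[X])^(2*(i:ℕ))).natDegree + (((X:(ZMod p)[X]))^(m-(i:ℕ))).natDegree) := by
          exact add_le_add (le_of_eq (natDegree_C _)) natDegree_mul_le
      _ ≤ 2*m := by
          rw [natDegree_pow, natDegree_X_pow, hX1deg]
          omega
  have hPdeg : P.natDegree ≤ 6*m+3 := by
    calc P.natDegree ≤ ((X+1:(ZMod p)[X])^(4*m+3)).natDegree + g.natDegree := natDegree_mul_le
      _ ≤ 6*m+3 := by rw [natDegree_pow, hX1deg]; omega
  set B : (ZMod p)[X] := P /ₘ (X^(4*m+3)) with hBdef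
  set A : (ZMod p)[X] := P %ₘ (X^(4*m+3)) with hAdef
  have hmon : ((X:(ZMod p)[X])^(4*m+3)).Monic := monic_X_pow _
  have hPAB : A + X^(4*m+3) * B = P := modByMonic_add_div P _
  have hBdeg : B.natDegree ≤ 2*m := by
    rw [hBdef, natDegree_divByMonic P hmon, natDegree_X_pow]
    omega
  have hAdeglt : A.natDegree < 4*m+3 := by
    have := natDegree_modByMonic_lt P hmon (by
      intro h
      have := congrArg natDegree h
      rw [natDegree_X_pow, natDegree_one] at this
      omega)
    rwa [natDegree_X_pow] at this
  have hAcoeff : ∀ k : ℕ, 2*m < k → A.coeff k = 0 := by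
    intro k hk
    by_cases hk2 : k < 4*m+3
    · have : A.coeff k = P.coeff k - (X^(4*m+3) * B).coeff k := by
        rw [← hPAB]; push_cast [coeff_add]; ring
      rw [this, hmid k (by omega) (by omega), (commute_X_pow B (4*m+3)).eq,
        coeff_mul_X_pow', if_neg (by omega)]
      ring
    · exact coeff_eq_zero_of_natDegree_lt (by omega)
  have hAdeg : A.natDegree ≤ 2*m := natDegree_le_iff_coeff_eq_zero.mpr hAcoeff
  -- key identity
  have hchar : (X + 1 : (ZMod p)[X])^p = X^p + 1 := by
    haveI : CharP (ZMod p) p := ZMod.charP p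
    rw [add_pow_char, one_pow]
  have hkey : (X+1:(ZMod p)[X])^(2*m+2) * P = (X^p + 1) * g := by
    rw [hPdef, ← mul_assoc, ← pow_add, show 2*m+2+(4*m+3) = p by omega, hchar]
  have hkey2 : (X+1:(ZMod p)[X])^(2*m+2) * A - g
      = X^(4*m+3) * (X^(2*m+2) * g - (X+1)^(2*m+2) * B) := by
    rw [← hPAB, show (X:(ZMod p)[X])^p = X^(4*m+3) * X^(2*m+2) by rw [← pow_add]; congr 1; omega] at hkey
    linear_combination hkey
  have hW0 : (X:(ZMod p)[X])^(2*m+2) * g - (X+1)^(2*m+2) * B = 0 := by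
    by_contra hW
    have hL : ((X+1:(ZMod p)[X])^(2*m+2) * A - g).natDegree = 4*m+3 +
        ((X:(ZMod p)[X])^(2*m+2) * g - (X+1)^(2*m+2) * B).natDegree := by
      rw [hkey2, natDegree_mul (pow_ne_zero _ X_ne_zero) hW, natDegree_X_pow]
    have hLle : ((X+1:(ZMod p)[X])^(2*m+2) * A - g).natDegree ≤ 4*m+2 := by
      refine le_trans (natDegree_sub_le _ _) (max_le ?_ (by omega))
      calc ((X+1:(ZMod p)[X])^(2*m+2) * A).natDegree
          ≤ ((X+1:(ZMod p)[X])^(2*m+2)).natDegree + A.natDegree := natDegree_mul_le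
        _ ≤ 4*m+2 := by rw [natDegree_pow, hX1deg]; omega
    omega
  have hL0 : (X+1:(ZMod p)[X])^(2*m+2) * A = g := by
    have h := hkey2
    rw [hW0, mul_zero, sub_eq_zero] at h
    exact h
  by_cases hA : A = 0
  · rw [hA, mul_zero] at hL0
    exact hgne hL0.symm
  · have hdg : g.natDegree = (2*m+2) * 1 + A.natDegree := by
      rw [← hL0, natDegree_mul (pow_ne_zero _ hX1ne) hA, natDegree_pow, hX1deg]
    omega
end

section
/- Let R = K[X_1,...,X_n]/(X_1^n+⋯+X_n^n) with K a field of prime characteristic p, p ∤ n, and suppose p ≡ 1 mod n. Then (x_1⋯x_n)^{n-2} does NOT lie in the Frobenius closure of (x_1^{n-1},...,x_n^{n-1}); in fact R is F-pure, so every ideal is Frobenius closed, and (x_1⋯x_n)^{n-2} ∉ (x_1^{n-1},...,x_n^{n-1}). -/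
open MvPolynomial

set_option maxHeartbeats 1000000


set_option maxHeartbeats 1000000 in
theorem lamA (K : Type*) [Field K] (p : ℕ) [Fact p.Prime] [CharP K p] :
    ∃ lam : K → K, lam 0 = 0 ∧ lam 1 = 1 ∧ (∀ x y, lam (x + y) = lam x + lam y) ∧
      ∀ c x, lam (c ^ p * x) = c * lam x := by
  classical
  let F := frobenius K p
  let k : Subfield K := F.fieldRange
  let V : Submodule k K := Submodule.span k {(1 : K)}
  obtain ⟨q, hq⟩ := V.exists_isCompl
  let pr : K →ₗ[k] V := Submodule.linearProjOfIsCompl V q hq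
  have hrange : ∀ x : K, ∃ c : K, F c = (pr x : K) := by
    intro x
    obtain ⟨a, ha⟩ := Submodule.mem_span_singleton.1 (pr x).2
    obtain ⟨c, hc⟩ := a.2
    exact ⟨c, by rw [hc, ← ha, Subfield.smul_def, smul_eq_mul, mul_one]⟩
  let lam : K → K := fun x => Function.invFun F (pr x : K)
  have hFlam : ∀ x, F (lam x) = (pr x : K) := fun x => Function.invFun_eq (hrange x)
  have hinj : Function.Injective F := frobenius_inj K p
  refine ⟨lam, ?_, ?_, ?_, ?_⟩
  · apply hinj; rw [hFlam, map_zero]; simp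
  · apply hinj
    rw [hFlam]
    have h1 : (1 : K) ∈ V := Submodule.mem_span_singleton_self _
    have h2 := congrArg Subtype.val (Submodule.linearProjOfIsCompl_apply_left hq ⟨(1 : K), h1⟩)
    calc (↑(pr 1) : K) = 1 := h2
    _ = F 1 := (map_one F).symm
  · intro x y; apply hinj
    rw [map_add, hFlam, hFlam, hFlam, map_add, Submodule.coe_add]
  · intro c x; apply hinj
    rw [map_mul, hFlam, hFlam]
    have hcp : c ^ p * x = (⟨F c, ⟨c, rfl⟩⟩ : k) • x := by
      rw [Subfield.smul_def, smul_eq_mul]; rfl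
    rw [hcp, pr.map_smul]
    rw [Submodule.coe_smul, Subfield.smul_def, smul_eq_mul]


-- componentwise arithmetic helper
theorem natkey {p : ℕ} (hp2 : 1 < p) (a b : ℕ) :
    p * a + (p - 1) = b ↔ (b % p = p - 1 ∧ a = b / p) := by
  constructor
  · rintro rfl
    constructor
    · rw [Nat.mul_add_mod, Nat.mod_eq_of_lt (by omega)]
    · rw [Nat.mul_add_div (by omega), Nat.div_eq_of_lt (by omega)]
      omega
  · rintro ⟨h1, rfl⟩
    have := Nat.div_add_mod b p
    omega

theorem cartier (K : Type*) [Field K] (p n : ℕ) [Fact p.Prime] [CharP K p]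
    (lam : K → K) (h0 : lam 0 = 0) (h1 : lam 1 = 1)
    (hadd : ∀ x y, lam (x + y) = lam x + lam y)
    (hpm : ∀ c x, lam (c ^ p * x) = c * lam x) :
    ∃ Cm : MvPolynomial (Fin n) K →+ MvPolynomial (Fin n) K,
      (∀ a b, Cm (a ^ p * b) = a * Cm b) ∧
      (∀ (δ : Fin n →₀ ℕ) (e : K), Cm (monomial δ e) =
        if ∀ i, δ i % p = p - 1 then
          monomial (Finsupp.mapRange (· / p) (Nat.zero_div p) δ) (lam e) else 0) := by
  classical
  have hp : p.Prime := Fact.out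
  have hp2 : 1 < p := hp.one_lt
  set α' : Fin n →₀ ℕ := Finsupp.equivFunOnFinite.symm (fun _ => p - 1) with hα'
  have hα'app : ∀ i, α' i = p - 1 := fun i => rfl
  set emb : (Fin n →₀ ℕ) → (Fin n →₀ ℕ) := fun γ => p • γ + α' with hemb
  have hembapp : ∀ γ i, emb γ i = p * γ i + (p - 1) := by
    intro γ i
    simp [hemb, hα'app, Finsupp.smul_apply, mul_comm]
  have embiff : ∀ γ δ, emb γ = δ ↔ ((∀ i, δ i % p = p - 1) ∧
      γ = Finsupp.mapRange (· / p) (Nat.zero_div p) δ) := by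
    intro γ δ
    rw [Finsupp.ext_iff]
    constructor
    · intro h
      have h' : ∀ i, δ i % p = p - 1 ∧ γ i = δ i / p := by
        intro i
        have := h i
        rw [hembapp] at this
        exact (natkey hp2 _ _).mp this
      refine ⟨fun i => (h' i).1, ?_⟩
      ext i
      rw [Finsupp.mapRange_apply]
      exact (h' i).2
    · rintro ⟨h1', rfl⟩
      intro i
      rw [hembapp, Finsupp.mapRange_apply]
      exact (natkey hp2 _ _).mpr ⟨h1' i, rfl⟩
  have hinj : Function.Injective emb := by
    intro γ γ' h
    have h1' := (embiff γ (emb γ')).mp h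
    have h2' := (embiff γ' (emb γ')).mp rfl
    rw [h1'.2, ← h2'.2]
  set Cm0 : MvPolynomial (Fin n) K → MvPolynomial (Fin n) K :=
    fun g => AddMonoidAlgebra.ofCoeff (Finsupp.mapRange lam h0 (Finsupp.comapDomain emb (AddMonoidAlgebra.coeff g) hinj.injOn)) with hCm0
  have hcoeff : ∀ g γ, coeff γ (Cm0 g) = lam (coeff (emb γ) g) := by
    intro g γ
    rfl
  have hCadd : ∀ g h, Cm0 (g + h) = Cm0 g + Cm0 h := by
    intro g h
    apply MvPolynomial.ext
    intro γ
    rw [coeff_add, hcoeff, hcoeff, hcoeff, coeff_add, hadd]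
  let Cm : MvPolynomial (Fin n) K →+ MvPolynomial (Fin n) K :=
    { toFun := Cm0
      map_zero' := by
        apply MvPolynomial.ext
        intro γ
        rw [hcoeff, coeff_zero, coeff_zero, h0]
      map_add' := hCadd }
  have hCmono : ∀ (δ : Fin n →₀ ℕ) (e : K), Cm (monomial δ e) =
      if ∀ i, δ i % p = p - 1 then
        monomial (Finsupp.mapRange (· / p) (Nat.zero_div p) δ) (lam e) else 0 := by
    intro δ e
    by_cases hc : ∀ i, δ i % p = p - 1
    · rw [if_pos hc]
      apply MvPolynomial.ext
      intro γ
      show coeff γ (Cm0 (monomial δ e)) = _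
      rw [hcoeff, coeff_monomial, coeff_monomial]
      have hiff : (δ = emb γ) ↔ ((Finsupp.mapRange (· / p) (Nat.zero_div p) δ) = γ) := by
        rw [eq_comm, embiff, eq_comm (b := γ)]
        simp [hc]
      rw [apply_ite lam, h0, if_congr hiff rfl rfl]
    · rw [if_neg hc]
      apply MvPolynomial.ext
      intro γ
      show coeff γ (Cm0 (monomial δ e)) = _
      rw [hcoeff, coeff_monomial, coeff_zero]
      have : ¬ (δ = emb γ) := by
        intro hh
        exact hc ((embiff γ δ).mp hh.symm).1
      rw [if_neg this, h0]
  refine ⟨Cm, ?_, hCmono⟩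
  -- semilinearity
  have hmono : ∀ (γ : Fin n →₀ ℕ) (c : K) (b : MvPolynomial (Fin n) K),
      Cm ((monomial γ c) ^ p * b) = monomial γ c * Cm b := by
    intro γ c b
    induction b using MvPolynomial.induction_on' with
    | monomial δ d =>
      rw [monomial_pow, monomial_mul, hCmono, hCmono]
      have hcond : (∀ i, (p • γ + δ) i % p = p - 1) ↔ (∀ i, δ i % p = p - 1) := by
        apply forall_congr'
        intro i
        have : (p • γ + δ) i = p * γ i + δ i := by
          simp [Finsupp.smul_apply, mul_comm]
        rw [this, Nat.mul_add_mod]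
      by_cases hd : ∀ i, δ i % p = p - 1
      · rw [if_pos (hcond.mpr hd), if_pos hd, hpm, monomial_mul]
        have hAB : Finsupp.mapRange (· / p) (Nat.zero_div p) (p • γ + δ) =
            γ + Finsupp.mapRange (· / p) (Nat.zero_div p) δ := by
          ext i
          simp only [Finsupp.mapRange_apply, Finsupp.add_apply, Finsupp.smul_apply,
            smul_eq_mul]
          rw [Nat.mul_add_div (by omega)]
        rw [hAB]
      · rw [if_neg (fun h => hd (hcond.mp h)), if_neg hd, mul_zero]
    | add b1 b2 ih1 ih2 =>
      rw [mul_add, map_add, ih1, ih2, map_add, mul_add]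
  intro a b
  induction a using MvPolynomial.induction_on' with
  | monomial γ c => exact hmono γ c b
  | add a1 a2 ih1 ih2 =>
    rw [add_pow_char, add_mul, map_add, ih1, ih2, add_mul]


theorem prodXpow (K : Type*) [Field K] (n : ℕ) (s : Finset (Fin n)) (d : Fin n → ℕ) :
    ∏ i ∈ s, (X i : MvPolynomial (Fin n) K) ^ d i =
      monomial (∑ i ∈ s, Finsupp.single i (d i)) 1 := by
  induction s using Finset.cons_induction with
  | empty => simp [monomial_zero']
  | cons a s ha ih =>
    rw [Finset.prod_cons, ih, X_pow_eq_monomial, monomial_mul, one_mul, Finset.sum_cons]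

theorem sumsingle_apply {n : ℕ} (d : Fin n → ℕ) (j : Fin n) :
    (∑ i : Fin n, Finsupp.single i (d i)) j = d j := by
  rw [Finsupp.finset_sum_apply]
  simp [Finsupp.single_apply]

theorem psi (K : Type*) [Field K] (p n : ℕ) [Fact p.Prime] [CharP K p]
    (hn : 3 ≤ n) (hpn : ¬ p ∣ n) (hp1 : p % n = 1)
    (lam : K → K) (h0 : lam 0 = 0) (h1 : lam 1 = 1)
    (hadd : ∀ x y, lam (x + y) = lam x + lam y)
    (hpm : ∀ c x, lam (c ^ p * x) = c * lam x)
    (Cm : MvPolynomial (Fin n) K →+ MvPolynomial (Fin n) K)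
    (hCp : ∀ a b, Cm (a ^ p * b) = a * Cm b)
    (hCmono : ∀ (δ : Fin n →₀ ℕ) (e : K), Cm (monomial δ e) =
        if ∀ i, δ i % p = p - 1 then
          monomial (Finsupp.mapRange (· / p) (Nat.zero_div p) δ) (lam e) else 0) :
    ∃ ψ : MvPolynomial (Fin n) K →+ MvPolynomial (Fin n) K,
      ψ 1 = 1 ∧ (∀ a b, ψ (a ^ p * b) = a * ψ b) ∧
      ∀ g, ψ ((∑ i : Fin n, X i ^ n) * g) ∈ Ideal.span {∑ i : Fin n, X i ^ n} := by
  classical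
  have hp : p.Prime := Fact.out
  have hp2 : 1 < p := hp.one_lt
  have hm' : n * (p / n) = p - 1 := by
    have := Nat.div_add_mod p n
    omega
  set F : MvPolynomial (Fin n) K := ∑ i : Fin n, X i ^ n with hF
  set m : ℕ := p / n with hmdef
  have hm : n * m = p - 1 := hm'
  have hmp : m < p := by
    have : m ≤ n * m := Nat.le_mul_of_pos_left m (by omega)
    omega
  set N : ℕ := Nat.multinomial Finset.univ (fun _ : Fin n => m) with hNdef
  -- the key computation
  have hKC : Cm (F ^ (p - 1)) = (N : MvPolynomial (Fin n) K) := by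
    rw [hF, Finset.sum_pow_eq_sum_piAntidiag, map_sum]
    have hterm : ∀ k ∈ Finset.piAntidiag Finset.univ (p - 1),
        Cm ((Nat.multinomial Finset.univ k : MvPolynomial (Fin n) K) *
          ∏ i : Fin n, (X i ^ n) ^ k i) =
        (if k = (fun _ : Fin n => m) then (N : MvPolynomial (Fin n) K) else 0) := by
      intro k hk
      obtain ⟨hksum, -⟩ := Finset.mem_piAntidiag.mp hk
      have hprod : (∏ i : Fin n, ((X i : MvPolynomial (Fin n) K) ^ n) ^ k i) =
          monomial (∑ i : Fin n, Finsupp.single i (n * k i)) 1 := by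
        simp_rw [← pow_mul]
        exact prodXpow K n Finset.univ _
      have hNcast : ((Nat.multinomial Finset.univ k : MvPolynomial (Fin n) K)) ^ p
          = (Nat.multinomial Finset.univ k : MvPolynomial (Fin n) K) := by
        rw [← frobenius_def]
        exact map_natCast _ _
      rw [hprod, ← hNcast, hCp, hCmono]
      by_cases hcond : ∀ i, (∑ i' : Fin n, Finsupp.single i' (n * k i')) i % p = p - 1
      · -- then k = const m
        have hkm : k = fun _ : Fin n => m := by
          funext i
          have h5 : (n * k i) % p = p - 1 := by
            have := hcond i
            rwa [sumsingle_apply] at this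
          have h6 : (n * m) % p = p - 1 := by rw [hm]; exact Nat.mod_eq_of_lt (by omega)
          have h7 : n * k i ≡ n * m [MOD p] := by
            unfold Nat.ModEq
            rw [h5, h6]
          have h8 : k i ≡ m [MOD p] :=
            Nat.ModEq.cancel_left_of_coprime (hp.coprime_iff_not_dvd.mpr hpn) h7
          have h9 : k i ≤ p - 1 := by
            rw [← hksum]
            exact Finset.single_le_sum (fun _ _ => Nat.zero_le _) (Finset.mem_univ i)
          have h10 : k i % p = m % p := h8
          rwa [Nat.mod_eq_of_lt (by omega), Nat.mod_eq_of_lt hmp] at h10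
        rw [if_pos hcond, if_pos hkm, hkm]
        have hzero : Finsupp.mapRange (· / p) (Nat.zero_div p)
            (∑ i : Fin n, Finsupp.single i (n * (fun _ : Fin n => m) i)) = (0 : Fin n →₀ ℕ) := by
          ext j
          rw [Finsupp.mapRange_apply, sumsingle_apply]
          show n * m / p = (0 : Fin n →₀ ℕ) j
          rw [hm, Nat.div_eq_of_lt (by omega)]
          simp
        rw [hzero, monomial_zero', h1, C_1, mul_one]
      · rw [if_neg hcond, mul_zero]
        have hne : ¬ (k = fun _ : Fin n => m) := by
          intro hkm
          apply hcond
          intro i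
          rw [sumsingle_apply, hkm, hm]
          exact Nat.mod_eq_of_lt (by omega)
        rw [if_neg hne]
    rw [Finset.sum_congr rfl hterm, Finset.sum_ite_eq' (Finset.piAntidiag Finset.univ (p-1))
      (fun _ : Fin n => m) (fun _ => (N : MvPolynomial (Fin n) K))]
    rw [if_pos]
    rw [Finset.mem_piAntidiag]
    refine ⟨?_, fun i _ => Finset.mem_univ i⟩
    rw [Finset.sum_const, Finset.card_univ, Fintype.card_fin, smul_eq_mul, hm]
  -- N is nonzero in K
  have hNK0 : ((N : K)) ≠ 0 := by
    rw [Ne, CharP.cast_eq_zero_iff K p]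
    intro hdvd
    have hspec := Nat.multinomial_spec Finset.univ (fun _ : Fin n => m)
    have hsum : (∑ _i : Fin n, m) = p - 1 := by
      rw [Finset.sum_const, Finset.card_univ, Fintype.card_fin, smul_eq_mul, hm]
    rw [hsum] at hspec
    have hdvd2 : p ∣ Nat.factorial (p - 1) := by
      rw [← hspec]
      exact hdvd.mul_left _
    rw [Nat.Prime.dvd_factorial hp] at hdvd2
    omega
  refine ⟨{ toFun := fun g => ((N : K))⁻¹ • Cm (F ^ (p - 1) * g),
            map_zero' := by
              show ((N : K))⁻¹ • Cm (F ^ (p - 1) * 0) = 0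
              rw [mul_zero, map_zero, smul_zero]
            map_add' := by
              intro a b
              show ((N : K))⁻¹ • Cm (F ^ (p - 1) * (a + b)) =
                ((N : K))⁻¹ • Cm (F ^ (p - 1) * a) + ((N : K))⁻¹ • Cm (F ^ (p - 1) * b)
              rw [mul_add, map_add, smul_add] }, ?_, ?_, ?_⟩
  · show ((N : K))⁻¹ • Cm (F ^ (p - 1) * 1) = 1
    rw [mul_one, hKC, ← map_natCast (MvPolynomial.C : K →+* MvPolynomial (Fin n) K) N,
      MvPolynomial.smul_eq_C_mul, ← C_mul, inv_mul_cancel₀ hNK0, C_1]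
  · intro a b
    show ((N : K))⁻¹ • Cm (F ^ (p - 1) * (a ^ p * b)) = a * (((N : K))⁻¹ • Cm (F ^ (p - 1) * b))
    rw [show F ^ (p - 1) * (a ^ p * b) = a ^ p * (F ^ (p - 1) * b) by ring, hCp, mul_smul_comm]
  · intro g
    show ((N : K))⁻¹ • Cm (F ^ (p - 1) * (F * g)) ∈ Ideal.span {F}
    have hFp : F ^ (p - 1) * (F * g) = F ^ p * g := by
      rw [← mul_assoc, ← pow_succ]
      congr 2
      omega
    rw [hFp, hCp, ← mul_smul_comm]
    exact Ideal.mem_span_singleton'.mpr ⟨((N : K))⁻¹ • Cm g, mul_comm _ _⟩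


theorem phiR (K : Type*) [Field K] (p n : ℕ)
    (R : Type*) [CommRing R]
    (f : MvPolynomial (Fin n) K →+* R) (hf : Function.Surjective f)
    (hker : RingHom.ker f = Ideal.span {∑ i : Fin n, X i ^ n})
    (ψ : MvPolynomial (Fin n) K →+ MvPolynomial (Fin n) K)
    (hψ1 : ψ 1 = 1) (hψp : ∀ a b, ψ (a ^ p * b) = a * ψ b)
    (hψF : ∀ g, ψ ((∑ i : Fin n, X i ^ n) * g) ∈ Ideal.span {∑ i : Fin n, X i ^ n}) :
    ∃ φ : R →+ R, φ 1 = 1 ∧ ∀ a b, φ (a ^ p * b) = a * φ b := by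
  classical
  set F : MvPolynomial (Fin n) K := ∑ i : Fin n, X i ^ n with hF
  have hwd : ∀ s t, f s = f t → f (ψ s) = f (ψ t) := by
    intro s t h
    have hst : s - t ∈ RingHom.ker f := by
      rw [RingHom.mem_ker, map_sub, h, sub_self]
    rw [hker, Ideal.mem_span_singleton'] at hst
    obtain ⟨a, ha⟩ := hst
    have hmem : ψ (s - t) ∈ RingHom.ker f := by
      rw [hker]
      rw [← ha, mul_comm]
      exact hψF a
    rw [map_sub, RingHom.mem_ker, map_sub, sub_eq_zero] at hmem
    exact hmem
  set g := Function.surjInv hf with hg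
  have hfg : ∀ r : R, f (g r) = r := fun r => Function.surjInv_eq hf r
  set φ0 : R → R := fun r => f (ψ (g r)) with hφ0
  have hφf : ∀ s, φ0 (f s) = f (ψ s) := fun s => hwd _ _ (hfg (f s))
  refine ⟨{ toFun := φ0,
            map_zero' := ?_,
            map_add' := ?_ }, ?_, ?_⟩
  · show φ0 0 = 0
    rw [← map_zero f, hφf, map_zero, map_zero]
  · intro r s
    obtain ⟨a, rfl⟩ := hf r
    obtain ⟨b, rfl⟩ := hf s
    show φ0 (f a + f b) = φ0 (f a) + φ0 (f b)
    rw [← map_add, hφf, hφf, hφf, map_add, map_add]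
  · show φ0 1 = 1
    rw [← map_one f, hφf, hψ1, map_one]
  · intro a b
    obtain ⟨s, rfl⟩ := hf a
    obtain ⟨t, rfl⟩ := hf b
    show φ0 (f s ^ p * f t) = f s * φ0 (f t)
    rw [← map_pow, ← map_mul, hφf, hφf, hψp, map_mul]

theorem iter_one {R : Type*} [CommRing R] (φ : R →+ R) (hφ1 : φ 1 = 1) :
    ∀ e, (⇑φ)^[e] (1 : R) = 1 := by
  intro e
  induction e with
  | zero => rfl
  | succ e ih => rw [Function.iterate_succ_apply, hφ1, ih]

theorem iter_p {R : Type*} [CommRing R] (p : ℕ) (φ : R →+ R)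
    (hφp : ∀ a b, φ (a ^ p * b) = a * φ b) :
    ∀ e a b, (⇑φ)^[e] (a ^ p ^ e * b) = a * (⇑φ)^[e] b := by
  intro e
  induction e with
  | zero => intro a b; simp
  | succ e ih =>
    intro a b
    rw [Function.iterate_succ_apply, Function.iterate_succ_apply, pow_succ, pow_mul, hφp, ih]

-- Frobenius closedness from the splitting
theorem fclosed (R : Type*) [CommRing R] (p : ℕ)
    (φ : R →+ R) (hφ1 : φ 1 = 1) (hφp : ∀ a b, φ (a ^ p * b) = a * φ b) :
    ∀ (I : Ideal R) (u : R), (∃ e : ℕ, u ^ p ^ e ∈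
      Ideal.span ((fun r => r ^ p ^ e) '' (I : Set R))) → u ∈ I := by
  classical
  rintro I u ⟨e, hu⟩
  let Φ : R →+ R := { toFun := φ^[e],
                      map_zero' := iterate_map_zero φ e,
                      map_add' := fun x y => iterate_map_add φ e x y }
  have hΦ1 : Φ 1 = 1 := iter_one φ hφ1 e
  have hΦp : ∀ a b, Φ (a ^ p ^ e * b) = a * Φ b := iter_p p φ hφp e
  obtain ⟨c, hcs, hcsum⟩ := Submodule.mem_span_set.mp hu
  have hu' : u = Φ (u ^ p ^ e) := by
    have := hΦp u 1
    rw [mul_one, hΦ1, mul_one] at this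
    exact this.symm
  rw [hu', ← hcsum, Finsupp.sum, map_sum]
  apply Ideal.sum_mem
  intro w hw
  obtain ⟨v, hvI, hvw⟩ := hcs hw
  show Φ (c w • w) ∈ I
  rw [smul_eq_mul, mul_comm, ← hvw, hΦp]
  exact Ideal.mul_mem_right _ I hvI


theorem part2 (K : Type*) [Field K] (p n : ℕ) [Fact p.Prime] [CharP K p]
    (hn : 3 ≤ n)
    (R : Type*) [CommRing R]
    (f : MvPolynomial (Fin n) K →+* R) (hf : Function.Surjective f)
    (hker : RingHom.ker f = Ideal.span {∑ i : Fin n, X i ^ n})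
    (x : Fin n → R) (hx : ∀ i, x i = f (X i)) :
    (∏ i, x i) ^ (n - 2) ∉ Ideal.span (Set.range fun i : Fin n => x i ^ (n - 1)) := by
  classical
  intro hmem
  set A : MvPolynomial (Fin n) K := (∏ i : Fin n, X i) ^ (n - 2) with hAdef
  set J : Ideal (MvPolynomial (Fin n) K) :=
    Ideal.span (Set.range fun i : Fin n => (X i : MvPolynomial (Fin n) K) ^ (n - 1)) with hJ
  have hfA : f A = (∏ i, x i) ^ (n - 2) := by
    rw [hAdef, map_pow, map_prod]
    congr 1
    apply Finset.prod_congr rfl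
    intro i _
    rw [hx i]
  have him : (Set.range fun i : Fin n => x i ^ (n - 1)) =
      f '' (Set.range fun i : Fin n => (X i : MvPolynomial (Fin n) K) ^ (n - 1)) := by
    rw [← Set.range_comp]
    apply congrArg
    funext i
    simp [Function.comp, hx i, map_pow]
  have hmem2 : f A ∈ Ideal.map f J := by
    rw [hJ, Ideal.map_span, ← him, hfA]
    exact hmem
  have hmem3 : A ∈ J ⊔ RingHom.ker f := by
    have h4 : A ∈ Ideal.comap f (Ideal.map f J) := Ideal.mem_comap.mpr hmem2
    rwa [Ideal.comap_map_of_surjective f hf] at h4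
  rw [hker] at hmem3
  obtain ⟨y, hy, z, hz, hyz⟩ := Submodule.mem_sup.mp hmem3
  obtain ⟨h, hh⟩ := Ideal.mem_span_singleton'.mp hz
  obtain ⟨c, hcsum⟩ := Ideal.mem_span_range_iff_exists_fun.mp hy
  set v : Fin n →₀ ℕ := ∑ i : Fin n, Finsupp.single i (n - 2) with hv
  have hA : A = monomial v 1 := by
    rw [hAdef, ← Finset.prod_pow]
    exact prodXpow K n Finset.univ _
  have hcA : coeff v A = 1 := by rw [hA, coeff_monomial, if_pos rfl]
  have hnotle : ∀ (i : Fin n) (d : ℕ), n - 2 < d → ¬ Finsupp.single i d ≤ v := by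
    intro i d hd hle
    have hsupp : i ∈ (Finsupp.single i d).support := by
      rw [Finsupp.support_single_ne_zero i (by omega)]
      exact Finset.mem_singleton_self i
    have h2 := (Finsupp.le_iff _ _).mp hle i hsupp
    rw [Finsupp.single_eq_same, hv, sumsingle_apply] at h2
    omega
  have hcy : coeff v y = 0 := by
    rw [← hcsum, coeff_sum]
    apply Finset.sum_eq_zero
    intro i _
    rw [X_pow_eq_monomial, coeff_mul_monomial', if_neg (hnotle i (n - 1) (by omega))]
  have hcz : coeff v z = 0 := by
    rw [← hh, Finset.mul_sum, coeff_sum]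
    apply Finset.sum_eq_zero
    intro i _
    rw [X_pow_eq_monomial, coeff_mul_monomial', if_neg (hnotle i n (by omega))]
  have := congrArg (coeff v) hyz
  rw [coeff_add, hcy, hcz, hcA, add_zero] at this
  exact one_ne_zero this.symm

theorem stmt_19 (K : Type*) [Field K] (p n : ℕ) [Fact p.Prime] [CharP K p]
    (hn : 3 ≤ n) (hpn : ¬ p ∣ n) (hp1 : p % n = 1)
    (R : Type*) [CommRing R]
    (f : MvPolynomial (Fin n) K →+* R) (hf : Function.Surjective f)
    (hker : RingHom.ker f = Ideal.span {∑ i : Fin n, X i ^ n})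
    (x : Fin n → R) (hx : ∀ i, x i = f (X i)) :
    -- every ideal of `R` is Frobenius closed (as `R` is F-pure)
    (∀ (I : Ideal R) (u : R), (∃ e : ℕ, u ^ p ^ e ∈
        Ideal.span ((fun r => r ^ p ^ e) '' (I : Set R))) → u ∈ I) ∧
      -- the element is not in the ideal
      (∏ i, x i) ^ (n - 2) ∉ Ideal.span (Set.range fun i : Fin n => x i ^ (n - 1)) ∧
      -- hence not in its Frobenius closure
      ¬ ∃ e : ℕ, ((∏ i, x i) ^ (n - 2)) ^ p ^ e ∈
        Ideal.span (Set.range fun i : Fin n => (x i ^ (n - 1)) ^ p ^ e) := by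
  obtain ⟨lam, h0, h1, hadd, hpm⟩ := lamA K p
  obtain ⟨Cm, hCp, hCmono⟩ := cartier K p n lam h0 h1 hadd hpm
  obtain ⟨ψ, hψ1, hψp, hψF⟩ := psi K p n hn hpn hp1 lam h0 h1 hadd hpm Cm hCp hCmono
  obtain ⟨φ, hφ1, hφp⟩ := phiR K p n R f hf hker ψ hψ1 hψp hψF
  have hone := fclosed R p φ hφ1 hφp
  have htwo := part2 K p n hn R f hf hker x hx
  refine ⟨hone, htwo, ?_⟩
  rintro ⟨e, he⟩
  apply htwo
  apply hone _ _ ⟨e, ?_⟩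
  refine Ideal.span_mono ?_ he
  rintro _ ⟨i, rfl⟩
  exact ⟨x i ^ (n - 1), Ideal.subset_span ⟨i, rfl⟩, rfl⟩
end
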